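/- arXiv:1507.03848 — 3 statements merged into one kernel-verified Lean document; each statement's English description precedes it below -/
import Mathlib

section
/- Let (D_i, U_i), i ≥ 1, be i.i.d. pairs of real random variables with D_i ≤ 0 ≤ U_i and D_i independent of U_i, and let D, U be independent copies of D_1, U_1 respectively, independent of everything else. Define Ŝ_i = Σ_{j≤i}(D_j+U_j), S_i = D_1 + Σ_{j<i+1, j≥1}(U_j+D_{j+1}) as above, and for u ≥ 0 define φ(u) = P(u + inf_{i≥0} S_i ≥ 0) and φ̂(u) = P(u + inf_{i≥0} Ŝ_i ≥ 0). Then for every u ≥ 0: φ̂(u) = E[φ(u+U)] and φ(u) = E[φ̂(u+D)]. -/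
/-!
Split the pairs: the scalars `D₀, U₀, D₁, U₁, …` are mutually independent, so the law of the
family is unchanged by any injective reindexing that sends `D`s to `D`s and `U`s to `U`s. Drop
`U₀` and shift the remaining `U`s down by one: this gives `Ŝ_{i+1} = U₀ + S'_i`, where `S'`
is `S` computed from the reindexed family, hence has the law of `S` and is independent of `U₀`.
Conditioning on `U₀` yields `φ̂(u) = E[φ(u + U₀)]` (for `u ≥ 0` the constraint `u + Ŝ₀ ≥ 0`
is void). Dropping `D₀` and shifting the `D`s in the same way gives `S_i = D₀ + Ŝ'_i` and
`φ(u) = E[φ̂(u + D₀)]`.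
-/

open MeasureTheory ProbabilityTheory Finset

namespace ProbabilityTheory

variable {Ω ι κ α β : Type*} [MeasurableSpace Ω] [MeasurableSpace α] [MeasurableSpace β]
  {P : Measure Ω}

lemma IndepFun.iIndepFun_fin_two [IsProbabilityMeasure P] {X Y : Ω → β}
    (hX : Measurable X) (hY : Measurable Y) (h : IndepFun X Y P) : iIndepFun ![X, Y] P := by
  have hm : ∀ j, Measurable (![X, Y] j) := Fin.forall_fin_two.2 ⟨hX, hY⟩
  rw [iIndepFun_iff_map_fun_eq_pi_map fun j => (hm j).aemeasurable]
  apply MeasurableEquiv.finTwoArrow.map_measurableEquiv_injective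
  have hlaws : (fun j => P.map (![X, Y] j)) = ![P.map X, P.map Y] := by
    ext1 j; fin_cases j <;> rfl
  rw [hlaws, (measurePreserving_finTwoArrow_vec _ _).map_eq,
    Measure.map_map MeasurableEquiv.finTwoArrow.measurable (measurable_pi_lambda _ hm),
    ← h.map_prod_eq_prod_map_map hX.aemeasurable hY.aemeasurable]
  rfl

lemma iIndepFun.uncurry_fin_two [IsProbabilityMeasure P] {X Y : ι → Ω → β}
    (hX : ∀ i, Measurable (X i)) (hY : ∀ i, Measurable (Y i))
    (h : iIndepFun (fun i ω => (X i ω, Y i ω)) P) (hXY : ∀ i, IndepFun (X i) (Y i) P) :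
    iIndepFun (fun p : ι × Fin 2 => ![X p.1, Y p.1] p.2) P := by
  have hm : ∀ i j, Measurable (![X i, Y i] j) := fun i => Fin.forall_fin_two.2 ⟨hX i, hY i⟩
  refine iIndepFun_uncurry' (X := fun i => ![X i, Y i]) hm ?_
    fun i => (hXY i).iIndepFun_fin_two (hX i) (hY i)
  have := h.comp (fun _ => MeasurableEquiv.finTwoArrow.symm) fun _ => MeasurableEquiv.measurable _
  convert this using 2 with i
  ext ω j
  fin_cases j <;> rfl

lemma iIndepFun.map_comp_eq_map_of_injective {X : ι → Ω → β} (h : iIndepFun X P)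
    (hm : ∀ i, Measurable (X i)) {e : ι → ι} (he : e.Injective)
    (hlaw : ∀ i, P.map (X (e i)) = P.map (X i)) :
    P.map (fun ω i => X (e i) ω) = P.map (fun ω i => X i ω) := by
  rw [(h.precomp he).map_fun_eq_infinitePi_map fun i => hm _, h.map_fun_eq_infinitePi_map hm]
  simp only [hlaw]

lemma iIndepFun.indepFun_pi_of_notMem_range {X : ι → Ω → β} (h : iIndepFun X P)
    (hm : ∀ i, Measurable (X i)) {e : κ → ι} {i : ι} (hi : i ∉ Set.range e) :
    IndepFun (X i) (fun ω k => X (e k) ω) P := by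
  set m : ι → MeasurableSpace Ω := fun j => MeasurableSpace.comap (X j) inferInstance
  have hind : Indep (⨆ j ∈ ({i} : Set ι), m j) (⨆ j ∈ Set.range e, m j) P :=
    indep_iSup_of_disjoint (fun j => (hm j).comap_le) h.iIndep
      (Set.disjoint_singleton_left.2 hi)
  have hmeas : Measurable[⨆ j ∈ Set.range e, m j] (fun ω k => X (e k) ω) :=
    @measurable_pi_lambda _ _ _ (⨆ j ∈ Set.range e, m j) _ _ fun k =>
      (comap_measurable (X (e k))).mono (le_biSup m ⟨k, rfl⟩) le_rfl
  rw [IndepFun_iff_Indep]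
  exact indep_of_indep_of_le_right (indep_of_indep_of_le_left hind
    (le_biSup m (Set.mem_singleton i))) hmeas.comap_le

lemma IndepFun.toReal_measure_preimage_eq_integral [IsFiniteMeasure P]
    {X : Ω → α} {Y : Ω → β} (h : IndepFun X Y P) (hX : Measurable X) (hY : Measurable Y)
    {A : Set (α × β)} (hA : MeasurableSet A) :
    (P ((fun ω => (X ω, Y ω)) ⁻¹' A)).toReal =
      ∫ ω, (P (Y ⁻¹' (Prod.mk (X ω) ⁻¹' A))).toReal ∂P := by
  have hslice : ∀ x, P (Y ⁻¹' (Prod.mk x ⁻¹' A)) = P.map Y (Prod.mk x ⁻¹' A) :=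
    fun x => (Measure.map_apply hY (measurable_prodMk_left hA)).symm
  simp_rw [hslice]
  rw [integral_toReal (f := fun ω => P.map Y (Prod.mk (X ω) ⁻¹' A))
      ((measurable_measure_prodMk_left hA).comp hX).aemeasurable
      (ae_of_all _ fun _ => measure_lt_top _ _),
    ← lintegral_map (measurable_measure_prodMk_left hA) hX, ← Measure.prod_apply hA,
    ← h.map_prod_eq_prod_map_map hX.aemeasurable hY.aemeasurable,
    Measure.map_apply (hX.prodMk hY) hA]

end ProbabilityTheory

noncomputable def survivalProb {Ω : Type*} [MeasurableSpace Ω] (P : Measure Ω)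
    (T : ℕ → Ω → ℝ) (u : ℝ) : ℝ :=
  (P {ω | ∀ i, 0 ≤ u + T i ω}).toReal

section survivalProb

variable {Ω α : Type*} [MeasurableSpace Ω] [MeasurableSpace α] {P : Measure Ω}

lemma measurableSet_forall_nonneg_add (u : ℝ) :
    MeasurableSet {x : ℕ → ℝ | ∀ i, 0 ≤ u + x i} := by
  simp only [Set.ofPred_forall]
  exact .iInter fun i => measurableSet_le measurable_const (by fun_prop)

lemma survivalProb_monotone [IsFiniteMeasure P] (T : ℕ → Ω → ℝ) :
    Monotone (survivalProb P T) := fun _ _ huv =>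
  ENNReal.toReal_mono (measure_ne_top _ _)
    (measure_mono fun _ hω i => (hω i).trans (by linarith))

lemma survivalProb_eq_succ {T : ℕ → Ω → ℝ} {u : ℝ} (h0 : ∀ ω, 0 ≤ u + T 0 ω) :
    survivalProb P T u = survivalProb P (fun i => T (i + 1)) u := by
  unfold survivalProb
  congr 2
  ext ω
  exact ⟨fun h i => h (i + 1), fun h i => i.casesOn (h0 ω) h⟩

lemma survivalProb_comp_congr {F : α → ℕ → ℝ} (hF : Measurable F) {Y Y' : Ω → α}
    (hY : Measurable Y) (hY' : Measurable Y') (hlaw : P.map Y = P.map Y') :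
    survivalProb P (fun i ω => F (Y ω) i) = survivalProb P (fun i ω => F (Y' ω) i) := by
  ext u
  have hA := hF (measurableSet_forall_nonneg_add u)
  unfold survivalProb
  change (P (Y ⁻¹' (F ⁻¹' {x | ∀ i, 0 ≤ u + x i}))).toReal =
    (P (Y' ⁻¹' (F ⁻¹' {x | ∀ i, 0 ≤ u + x i}))).toReal
  rw [← Measure.map_apply hY hA, ← Measure.map_apply hY' hA, hlaw]

lemma integral_survivalProb_add [IsProbabilityMeasure P] {W : Ω → ℝ} {T : ℕ → Ω → ℝ}
    (hW : Measurable W) (hT : ∀ i, Measurable (T i))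
    (h : IndepFun W (fun ω i => T i ω) P) (u : ℝ) :
    ∫ ω, survivalProb P T (u + W ω) ∂P = survivalProb P (fun i ω => W ω + T i ω) u := by
  have hA : MeasurableSet {p : ℝ × (ℕ → ℝ) | ∀ i, 0 ≤ u + p.1 + p.2 i} := by
    simp only [Set.ofPred_forall]
    exact .iInter fun i => measurableSet_le measurable_const (by fun_prop)
  simp_rw [survivalProb, ← add_assoc]
  exact (h.toReal_measure_preimage_eq_integral hW (measurable_pi_lambda _ hT) hA).symm

lemma integral_survivalProb_add_eq_of_identDistrib [IsProbabilityMeasure P] (T : ℕ → Ω → ℝ)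
    {W W' : Ω → ℝ} (h : IdentDistrib W W' P P) (u : ℝ) :
    ∫ ω, survivalProb P T (u + W ω) ∂P = ∫ ω, survivalProb P T (u + W' ω) ∂P :=
  (h.comp ((survivalProb_monotone T).measurable.comp (measurable_const_add u))).integral_eq

end survivalProb

def shiftAt {γ : Type*} [DecidableEq γ] (k : γ) (p : ℕ × γ) : ℕ × γ :=
  if p.2 = k then (p.1 + 1, p.2) else p

section shiftAt

variable {γ : Type*} [DecidableEq γ] (k : γ)

@[simp] lemma snd_shiftAt (p : ℕ × γ) : (shiftAt k p).2 = p.2 := by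
  unfold shiftAt; split_ifs <;> rfl

lemma shiftAt_injective : (shiftAt k).Injective := by
  rintro ⟨i, a⟩ ⟨j, b⟩ h
  have hab : a = b := by simpa using congrArg Prod.snd h
  subst hab
  unfold shiftAt at h
  split_ifs at h <;> simp_all

lemma zero_notMem_range_shiftAt : ((0, k) : ℕ × γ) ∉ Set.range (shiftAt k) := by
  rintro ⟨⟨i, a⟩, h⟩
  unfold shiftAt at h
  split_ifs at h <;> simp_all

variable {Ω : Type*} [MeasurableSpace Ω] {P : Measure Ω} [IsProbabilityMeasure P]

lemma survivalProb_add_shiftAt_eq_integral {X : ℕ × γ → Ω → ℝ} (h : iIndepFun X P)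
    (hm : ∀ p, Measurable (X p)) (hlaw : ∀ p, P.map (X p) = P.map (X (0, p.2)))
    {F : (ℕ × γ → ℝ) → ℕ → ℝ} (hF : Measurable F) (u : ℝ) :
    survivalProb P (fun i ω => X (0, k) ω + F (fun p => X (shiftAt k p) ω) i) u =
      ∫ ω, survivalProb P (fun i ω => F (fun p => X p ω) i) (u + X (0, k) ω) ∂P := by
  have hshift : Measurable fun ω p => X (shiftAt k p) ω := measurable_pi_lambda _ fun p => hm _
  have hind : IndepFun (X (0, k)) (fun ω i => F (fun p => X (shiftAt k p) ω) i) P :=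
    (h.indepFun_pi_of_notMem_range hm (zero_notMem_range_shiftAt k)).comp measurable_id hF
  have hshift_law : P.map (fun ω p => X (shiftAt k p) ω) = P.map (fun ω p => X p ω) :=
    h.map_comp_eq_map_of_injective hm (shiftAt_injective k) fun p => by
      rw [hlaw, snd_shiftAt, ← hlaw]
  rw [← integral_survivalProb_add (T := fun i ω => F (fun p => X (shiftAt k p) ω) i) (hm _)
      (fun i => (measurable_pi_apply i).comp (hF.comp hshift)) hind,
    survivalProb_comp_congr hF hshift (measurable_pi_lambda _ hm) hshift_law]

end shiftAt

/- With `x (j, 0)` standing for `D_j` and `x (j, 1)` for `U_j`, `walk x` is `S` and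
`hatWalk x` is `Ŝ`. -/
def walk (x : ℕ × Fin 2 → ℝ) (i : ℕ) : ℝ :=
  x (0, 0) + ∑ j ∈ range i, (x (j, 1) + x (j + 1, 0))

def hatWalk (x : ℕ × Fin 2 → ℝ) (i : ℕ) : ℝ :=
  ∑ j ∈ range i, (x (j, 0) + x (j, 1))

lemma measurable_walk : Measurable walk := by
  unfold walk; fun_prop

lemma measurable_hatWalk : Measurable hatWalk := by
  unfold hatWalk; fun_prop

lemma walk_eq_add_hatWalk (x : ℕ × Fin 2 → ℝ) (i : ℕ) :
    walk x i = x (0, 0) + hatWalk (fun p => x (shiftAt 0 p)) i := by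
  simp [walk, hatWalk, shiftAt, add_comm]

lemma hatWalk_succ_eq_add_walk (x : ℕ × Fin 2 → ℝ) (i : ℕ) :
    hatWalk x (i + 1) = x (0, 1) + walk (fun p => x (shiftAt 1 p)) i := by
  simp only [walk, hatWalk, shiftAt, sum_range_succ', zero_ne_one, ↓reduceIte,
    add_comm (x (_, 1))]
  ring

theorem survival_probability_relations_general {Ω : Type*} [MeasurableSpace Ω] (P : Measure Ω)
    [IsProbabilityMeasure P]
    (D U : ℕ → Ω → ℝ) (D' U' : Ω → ℝ)
    (hDmeas : ∀ i, Measurable (D i)) (hUmeas : ∀ i, Measurable (U i))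
    (hindep : iIndepFun (fun i ω => (D i ω, U i ω)) P)
    (hpairindep : ∀ i, IndepFun (D i) (U i) P)
    (hident : ∀ i, IdentDistrib (fun ω => (D i ω, U i ω)) (fun ω => (D 0 ω, U 0 ω)) P P)
    (hD'ident : IdentDistrib D' (D 0) P P) (hU'ident : IdentDistrib U' (U 0) P P)
    (Shat S : ℕ → Ω → ℝ)
    (hShat : ∀ i ω, Shat i ω = ∑ j ∈ Finset.range i, (D j ω + U j ω))
    (hS : ∀ i ω, S i ω = D 0 ω + ∑ j ∈ Finset.range i, (U j ω + D (j + 1) ω))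
    (φ φhat : ℝ → ℝ)
    (hφ : ∀ u : ℝ, φ u = (P {ω | ∀ i : ℕ, 0 ≤ u + S i ω}).toReal)
    (hφhat : ∀ u : ℝ, φhat u = (P {ω | ∀ i : ℕ, 0 ≤ u + Shat i ω}).toReal) :
    ∀ u : ℝ, 0 ≤ u →
      φhat u = ∫ ω, φ (u + U' ω) ∂P ∧ φ u = ∫ ω, φhat (u + D' ω) ∂P := by
  intro u hu
  set ξ : ℕ × Fin 2 → Ω → ℝ := fun p => ![D p.1, U p.1] p.2
  have hξm : ∀ p, Measurable (ξ p) := fun ⟨j, k⟩ => by fin_cases k; exacts [hDmeas j, hUmeas j]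
  have hξindep : iIndepFun ξ P := hindep.uncurry_fin_two hDmeas hUmeas hpairindep
  have hξlaw : ∀ p, P.map (ξ p) = P.map (ξ (0, p.2)) := fun ⟨j, k⟩ => by
    fin_cases k
    exacts [((hident j).comp measurable_fst).map_eq, ((hident j).comp measurable_snd).map_eq]
  have hS' : S = fun i ω => walk (fun p => ξ p ω) i := by ext i ω; simp [hS, walk, ξ]
  have hShat' : Shat = fun i ω => hatWalk (fun p => ξ p ω) i := by
    ext i ω; simp [hShat, hatWalk, ξ]
  rw [show φ = survivalProb P S from funext hφ, show φhat = survivalProb P Shat from funext hφhat]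
  constructor
  · calc survivalProb P Shat u
        = survivalProb P (fun i => Shat (i + 1)) u :=
          survivalProb_eq_succ fun ω => by simpa [hShat] using hu
      _ = survivalProb P (fun i ω => ξ (0, 1) ω + walk (fun p => ξ (shiftAt 1 p) ω) i) u := by
          simp only [hShat', hatWalk_succ_eq_add_walk]
      _ = ∫ ω, survivalProb P S (u + U 0 ω) ∂P := by
          rw [survivalProb_add_shiftAt_eq_integral 1 hξindep hξm hξlaw measurable_walk, hS']
          rfl
      _ = ∫ ω, survivalProb P S (u + U' ω) ∂P :=
          integral_survivalProb_add_eq_of_identDistrib S hU'ident.symm u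
  · calc survivalProb P S u
        = survivalProb P (fun i ω => ξ (0, 0) ω + hatWalk (fun p => ξ (shiftAt 0 p) ω) i) u := by
          simp only [hS', walk_eq_add_hatWalk]
      _ = ∫ ω, survivalProb P Shat (u + D 0 ω) ∂P := by
          rw [survivalProb_add_shiftAt_eq_integral 0 hξindep hξm hξlaw measurable_hatWalk, hShat']
          rfl
      _ = ∫ ω, survivalProb P Shat (u + D' ω) ∂P :=
          integral_survivalProb_add_eq_of_identDistrib Shat hD'ident.symm u

/-- survival probabilities under continuous and Poisson observation:
φ̂(u) = E[φ(u+U)] and φ(u) = E[φ̂(u+D)]. -/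
theorem survival_probability_relations {Ω : Type*} [MeasurableSpace Ω] (P : Measure Ω)
    [IsProbabilityMeasure P]
    (D U : ℕ → Ω → ℝ) (D' U' : Ω → ℝ)
    (hDmeas : ∀ i, Measurable (D i)) (hUmeas : ∀ i, Measurable (U i))
    (hD'meas : Measurable D') (hU'meas : Measurable U')
    (hindep : iIndepFun (fun i ω => (D i ω, U i ω)) P)
    (hpairindep : ∀ i, IndepFun (D i) (U i) P)
    (hident : ∀ i, IdentDistrib (fun ω => (D i ω, U i ω)) (fun ω => (D 0 ω, U 0 ω)) P P)
    (hDneg : ∀ i ω, D i ω ≤ 0) (hUpos : ∀ i ω, 0 ≤ U i ω)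
    (hD'U'indep : IndepFun D' U' P)
    (hcopiesindep : IndepFun (fun ω => (D' ω, U' ω)) (fun ω => fun i => (D i ω, U i ω)) P)
    (hD'ident : IdentDistrib D' (D 0) P P) (hU'ident : IdentDistrib U' (U 0) P P)
    (Shat S : ℕ → Ω → ℝ)
    (hShat : ∀ i ω, Shat i ω = ∑ j ∈ Finset.range i, (D j ω + U j ω))
    (hS : ∀ i ω, S i ω = D 0 ω + ∑ j ∈ Finset.range i, (U j ω + D (j + 1) ω))
    (φ φhat : ℝ → ℝ)
    (hφ : ∀ u : ℝ, φ u = (P {ω | ∀ i : ℕ, 0 ≤ u + S i ω}).toReal)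
    (hφhat : ∀ u : ℝ, φhat u = (P {ω | ∀ i : ℕ, 0 ≤ u + Shat i ω}).toReal) :
    ∀ u : ℝ, 0 ≤ u →
      φhat u = ∫ ω, φ (u + U' ω) ∂P ∧ φ u = ∫ ω, φhat (u + D' ω) ∂P :=
  survival_probability_relations_general P D U D' U' hDmeas hUmeas hindep hpairindep hident hD'ident
    hU'ident Shat S hShat hS φ φhat hφ hφhat
end

section
/- Under the scale-function hypotheses (W_α continuous nonnegative with Laplace transform 1/ψ_α(θ) for θ > Φ_α, Z_α(u,θ) = ψ_α(θ)∫_0^∞ e^{-θy}W_α(u+y)dy for θ > Φ_α), for all u ≥ 0 and all μ > β > Φ_α: ∫_0^∞ Z_α(u+x, β) e^{-μx} dx = (1/(μ−β)) · ( Z_α(u,β) − (ψ_α(β)/ψ_α(μ)) · Z_α(u,μ) ). -/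
open MeasureTheory Set Filter Topology Real

/-! With `g t = e^{-βt} W(u+t)`, the substitution `y ↦ y - x` gives
`Z(u+x, β) = ψ_α(β) e^{βx} ∫_x^∞ g`, so the left-hand side is `ψ_α(β)` times the Laplace
transform at `μ - β` of the tail `T(x) = ∫_x^∞ g`, which converges because `|T| ≤ ∫_0^∞ |g|`.
Since `T' = -g`, integration by parts against `e^{-(μ-β)x}` gives
`(T(0) - ∫_0^∞ e^{-(μ-β)x} g(x) dx)/(μ - β)`, and the two integrals are `Z(u,β)/ψ_α(β)` and `Z(u,μ)/ψ_α(μ)`. -/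

theorem setIntegral_comp_add_right_Ioi {E : Type*} [NormedAddCommGroup E] [NormedSpace ℝ E]
    (f : ℝ → E) (a x : ℝ) : ∫ y in Ioi a, f (y + x) = ∫ t in Ioi (a + x), f t := by
  simpa [preimage_add_const_Ioi] using
    (measurePreserving_add_right volume x).setIntegral_preimage_emb
      (measurableEmbedding_addRight x) f (Ioi (a + x))

section Tail

variable {g : ℝ → ℝ}

theorem Continuous.integrableOn_Ioi_of_integrableOn_Ioi (hg : Continuous g) {a : ℝ}
    (h : IntegrableOn g (Ioi a)) (b : ℝ) : IntegrableOn g (Ioi b) := by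
  refine ((hg.integrableOn_Ioc (a := b) (b := a)).union h).mono_set fun t (ht : b < t) => ?_
  rcases le_or_gt t a with hta | hat
  · exact Or.inl ⟨ht, hta⟩
  · exact Or.inr hat

theorem hasDerivAt_integral_Ioi (hg : Continuous g) {a : ℝ} (h : IntegrableOn g (Ioi a))
    (x : ℝ) : HasDerivAt (fun y => ∫ t in Ioi y, g t) (-g x) x := by
  have htail : (fun y => ∫ t in Ioi y, g t) = fun y => (∫ t in Ioi x, g t) - ∫ t in x..y, g t :=
    funext fun y => by
      rw [eq_sub_iff_add_eq', intervalIntegral.integral_interval_add_Ioi'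
        (hg.intervalIntegrable x y) (hg.integrableOn_Ioi_of_integrableOn_Ioi h y)]
  rw [htail, ← zero_sub]
  exact (hasDerivAt_const x _).sub (hg.integral_hasStrictDerivAt x x).hasDerivAt

theorem norm_integral_Ioi_le {a x : ℝ} (h : IntegrableOn g (Ioi a)) (hx : a ≤ x) :
    ‖∫ t in Ioi x, g t‖ ≤ ∫ t in Ioi a, ‖g t‖ :=
  (norm_integral_le_integral_norm g).trans <|
    setIntegral_mono_set h.norm (Eventually.of_forall fun _ => norm_nonneg _)
      (Ioi_subset_Ioi hx).eventuallyLE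

theorem integral_integral_Ioi_mul_exp (hg : Continuous g) (h : IntegrableOn g (Ioi 0))
    {c : ℝ} (hc : 0 < c) :
    ∫ x in Ioi 0, (∫ t in Ioi x, g t) * exp (-c * x)
      = ((∫ t in Ioi 0, g t) - ∫ x in Ioi 0, exp (-c * x) * g x) / c := by
  set T : ℝ → ℝ := fun y => ∫ t in Ioi y, g t
  have hT : ∀ x, HasDerivAt T (-g x) x := hasDerivAt_integral_Ioi hg h
  have hTcont : Continuous T := continuous_iff_continuousAt.2 fun x => (hT x).continuousAt
  have hv : ∀ x, HasDerivAt (fun y => -exp (-c * y) / c) (exp (-c * x)) x := fun x => by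
    have hlin : HasDerivAt (fun y => -c * y) (-c) x := by
      simpa using (hasDerivAt_id x).const_mul (-c)
    exact (hlin.exp.neg.div_const c).congr_deriv (by field_simp)
  have hexp_tendsto : Tendsto (fun y => exp (-c * y)) atTop (𝓝 0) :=
    tendsto_exp_atBot.comp (tendsto_id.const_mul_atTop_of_neg (neg_neg_of_pos hc))
  have hTexp : IntegrableOn (fun x => T x * exp (-c * x)) (Ioi 0) :=
    (exp_neg_integrableOn_Ioi 0 hc).bdd_mul hTcont.aestronglyMeasurable.restrict
      ((ae_restrict_iff' measurableSet_Ioi).2 <| Eventually.of_forall fun x (hx : 0 < x) =>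
        norm_integral_Ioi_le h hx.le)
  have hgexp : IntegrableOn (fun x => -g x * (-exp (-c * x) / c)) (Ioi 0) := by
    simp only [neg_div, neg_mul_neg]
    refine h.mul_bdd (c := 1 / c) (by fun_prop) ((ae_restrict_iff' measurableSet_Ioi).2 <|
      Eventually.of_forall fun x (hx : 0 < x) => ?_)
    rw [norm_div, norm_of_nonneg (exp_pos _).le, norm_of_nonneg hc.le]
    gcongr
    exact exp_le_one_iff.2 (by nlinarith)
  have hparts := integral_Ioi_mul_deriv_eq_deriv_mul (fun x _ => hT x) (fun x _ => hv x)
    hTexp hgexp ((hTcont.mul (by fun_prop)).continuousAt.tendsto.mono_left nhdsWithin_le_nhds)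
    ((tendsto_integral_Ioi_zero tendsto_id).mul (hexp_tendsto.neg.div_const c))
  have hsecond : ∫ x in Ioi 0, -g x * (-exp (-c * x) / c)
      = (∫ x in Ioi 0, exp (-c * x) * g x) / c := by
    rw [← integral_div]
    congr 1 with x
    ring
  rw [hparts, hsecond, Pi.mul_apply]
  simp only [T, mul_zero, zero_mul, exp_zero]
  ring

end Tail

theorem setIntegral_exp_mul_comp_add (W : ℝ → ℝ) (β u x : ℝ) :
    ∫ y in Ioi 0, exp (-β * y) * W (u + x + y)
      = exp (β * x) * ∫ t in Ioi x, exp (-β * t) * W (u + t) := by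
  rw [← zero_add x, ← setIntegral_comp_add_right_Ioi, ← integral_const_mul, zero_add]
  refine integral_congr_ae (Eventually.of_forall fun y => ?_)
  have hexp : exp (-β * y) = exp (β * x) * exp (-β * (y + x)) := by
    rw [← exp_add]; ring_nf
  simp only [hexp, show u + x + y = u + (y + x) by ring, mul_assoc]

theorem laplace_transform_of_Z_general
    (ψα : ℝ → ℝ)
    (Φα : ℝ) (hΦα0 : 0 ≤ Φα)
    (hlargest : ∀ θ, 0 ≤ θ → ψα θ = 0 → θ ≤ Φα)
    (W : ℝ → ℝ) (hWcont : Continuous W)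
    (hWint : ∀ θ > Φα, ∀ u ≥ (0:ℝ),
      IntegrableOn (fun y => Real.exp (-θ * y) * W (u + y)) (Set.Ioi 0))
    (Z : ℝ → ℝ → ℝ)
    (hZ : ∀ u ≥ (0:ℝ), ∀ θ > Φα,
      Z u θ = ψα θ * ∫ y in Set.Ioi (0:ℝ), Real.exp (-θ * y) * W (u + y)) :
    ∀ u ≥ (0:ℝ), ∀ β μ, Φα < β → β < μ →
      ∫ x in Set.Ioi (0:ℝ), Z (u + x) β * Real.exp (-μ * x)
        = 1 / (μ - β) * (Z u β - ψα β / ψα μ * Z u μ) := by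
  intro u hu β μ hβ hμ
  have hΦμ : Φα < μ := hβ.trans hμ
  have hψμ : ψα μ ≠ 0 := fun h => (hlargest μ (hΦα0.trans hΦμ.le) h).not_gt hΦμ
  set g : ℝ → ℝ := fun t => exp (-β * t) * W (u + t)
  have hZ_tail : ∀ x ∈ Ioi (0:ℝ),
      Z (u + x) β * exp (-μ * x) = ψα β * ((∫ t in Ioi x, g t) * exp (-(μ - β) * x)) := by
    intro x (hx : 0 < x)
    have hexp : exp (β * x) * exp (-μ * x) = exp (-(μ - β) * x) := by
      rw [← exp_add]; ring_nf
    rw [hZ (u + x) (by linarith) β hβ, setIntegral_exp_mul_comp_add, ← hexp]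
    ring
  have hg_exp : ∀ x, exp (-(μ - β) * x) * g x = exp (-μ * x) * W (u + x) := fun x => by
    rw [← mul_assoc, ← exp_add]; ring_nf
  rw [setIntegral_congr_fun measurableSet_Ioi hZ_tail, integral_const_mul,
    integral_integral_Ioi_mul_exp (by fun_prop) (hWint β hβ u hu) (sub_pos.2 hμ),
    funext hg_exp, hZ u hu β hβ, hZ u hu μ hΦμ]
  field_simp

/-- Laplace transform of x ↦ Z_α(u+x,β):
∫_0^∞ Z_α(u+x,β) e^{-μx} dx = (Z_α(u,β) − (ψ_α(β)/ψ_α(μ)) Z_α(u,μ))/(μ−β). -/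
theorem laplace_transform_of_Z
    (ψ : ℝ → ℝ) (hconv : ConvexOn ℝ (Set.Ici 0) ψ) (hψ0 : ψ 0 = 0)
    (α : ℝ) (hα : 0 ≤ α) (ψα : ℝ → ℝ) (hψα : ∀ θ, ψα θ = ψ θ - α)
    (Φα : ℝ) (hΦα0 : 0 ≤ Φα) (hroot : ψα Φα = 0)
    (hlargest : ∀ θ, 0 ≤ θ → ψα θ = 0 → θ ≤ Φα)
    (W : ℝ → ℝ) (hWcont : Continuous W) (hWpos : ∀ u, 0 ≤ W u) (hWmono : Monotone W)
    (hWint : ∀ θ > Φα, ∀ u ≥ (0:ℝ),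
      IntegrableOn (fun y => Real.exp (-θ * y) * W (u + y)) (Set.Ioi 0))
    (hWlap : ∀ θ > Φα, ∫ u in Set.Ioi (0:ℝ), Real.exp (-θ * u) * W u = 1 / ψα θ)
    (Z : ℝ → ℝ → ℝ)
    (hZ : ∀ u ≥ (0:ℝ), ∀ θ > Φα,
      Z u θ = ψα θ * ∫ y in Set.Ioi (0:ℝ), Real.exp (-θ * y) * W (u + y))
    (hZint : ∀ u ≥ (0:ℝ), ∀ β μ, Φα < β → β < μ →
      IntegrableOn (fun x => Z (u + x) β * Real.exp (-μ * x)) (Set.Ioi 0)) :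
    ∀ u ≥ (0:ℝ), ∀ β μ, Φα < β → β < μ →
      ∫ x in Set.Ioi (0:ℝ), Z (u + x) β * Real.exp (-μ * x)
        = 1 / (μ - β) * (Z u β - ψα β / ψα μ * Z u μ) :=
  laplace_transform_of_Z_general ψα Φα hΦα0 hlargest W hWcont hWint Z hZ
end

section
/- With the same hypotheses as in the previous item (E(e^{-αT^U}; U ∈ dy) = Φ_λ e^{-Φ_{λ+α}y} dy, scale functions W_α, Z_α with Z_α(u,θ) = ψ_α(θ)∫_0^∞ e^{-θy}W_α(u+y)dy for θ > Φ_α, and ψ_α(Φ_{λ+α}) = λ), for all u ≥ 0 and all β ≥ 0 with β ≠ Φ_{λ+α}: E[e^{-αT^U} Z_α(u+U, β)] = (Φ_λ/(Φ_{λ+α} − β)) · ( Z_α(u,β) − (ψ_α(β)/λ) Z_α(u, Φ_{λ+α}) ). -/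
/-!
Since `v ↦ Z(v, β)` solves `Z' = β Z - ψ(β) W`, integrating `(e^{-μx} Z(u + x, β))'` over
`(0, ∞)` with `μ = Φ_{λ+α}` gives
`(μ - β) ∫ e^{-μx} Z(u + x, β) dx = Z(u, β) - ψ(β) ∫ e^{-μx} W(u + x) dx`,
and the last integral is `Z(u, μ) / λ`. The boundary term at infinity vanishes because
`Z(·, β) = O(e^{θ ·})` for any `θ ∈ (Φ_α, μ)`: for `β ≤ θ` by comparing the defining formula
with that of `Z(·, θ) ≥ 0`, for `β > θ` because the Laplace representation of `Z(·, β)`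
decreases in `β`. This argument works for every `β ≠ μ` at once, so no analytic continuation
is needed.
-/

open MeasureTheory Set Real Filter Topology Asymptotics

lemma integrableOn_Ioi_comp_add_right_iff {E : Type*} [NormedAddCommGroup E] (g : ℝ → E)
    (a v : ℝ) : IntegrableOn (fun y => g (y + v)) (Ioi a) ↔ IntegrableOn g (Ioi (a + v)) := by
  have hpre : (fun y => y + v) ⁻¹' Ioi (a + v) = Ioi a := by ext; simp
  rw [← hpre]
  exact (measurePreserving_add_right volume v).integrableOn_comp_preimage
    (MeasurableEquiv.addRight v).measurableEmbedding

lemma integrableOn_exp_neg_mul_comp_add {g : ℝ → ℝ} {θ v : ℝ}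
    (hg : IntegrableOn (fun y => exp (-θ * y) * g y) (Ioi 0)) (hv : 0 ≤ v) :
    IntegrableOn (fun y => exp (-θ * y) * g (v + y)) (Ioi 0) := by
  have hshift : IntegrableOn (fun y => exp (-θ * (y + v)) * g (y + v)) (Ioi 0) :=
    (integrableOn_Ioi_comp_add_right_iff (fun y => exp (-θ * y) * g y) 0 v).2
      (hg.mono_set (Ioi_subset_Ioi (by simpa using hv)))
  refine IntegrableOn.congr_fun (hshift.const_mul (exp (θ * v))) (fun y _ => ?_) measurableSet_Ioi
  rw [← mul_assoc, ← exp_add, add_comm y v]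
  ring_nf

lemma setIntegral_exp_neg_mul_le_of_le {g : ℝ → ℝ} {β θ : ℝ} (hg0 : ∀ y, 0 ≤ g y) (hθβ : θ ≤ β)
    (hg : IntegrableOn (fun y => exp (-θ * y) * g y) (Ioi 0)) :
    ∫ y in Ioi 0, exp (-β * y) * g y ≤ ∫ y in Ioi 0, exp (-θ * y) * g y := by
  refine integral_mono_of_nonneg (ae_of_all _ fun y => mul_nonneg (exp_pos _).le (hg0 y)) hg
    ((ae_restrict_iff' measurableSet_Ioi).2 (ae_of_all _ fun y (hy : 0 < y) => ?_))
  exact mul_le_mul_of_nonneg_right (exp_le_exp.2 (by nlinarith)) (hg0 y)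

lemma integral_exp_neg_mul_of_hasDerivAt {f h : ℝ → ℝ} {β θ μ : ℝ}
    (hf : ∀ x, HasDerivAt f (β * f x - h x) x) (hθμ : θ < μ)
    (hfO : f =O[atTop] fun x => exp (θ * x))
    (hh : IntegrableOn (fun x => exp (-μ * x) * h x) (Ioi 0)) :
    (μ - β) * ∫ x in Ioi 0, exp (-μ * x) * f x = f 0 - ∫ x in Ioi 0, exp (-μ * x) * h x := by
  set F := fun x => exp (-μ * x) * f x with hFdef
  have hFO : F =O[atTop] fun x => exp (-(μ - θ) * x) :=
    ((isBigO_refl (fun x => exp (-μ * x)) atTop).mul hfO).congr_right fun x => by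
      rw [← exp_add]; ring_nf
  have hFderiv : ∀ x, HasDerivAt F ((β - μ) * F x - exp (-μ * x) * h x) x := by
    intro x
    refine (((hasDerivAt_id x).const_mul (-μ)).exp.mul (hf x)).congr_deriv ?_
    simp only [hFdef, id]
    ring
  have hFcont : Continuous F := continuous_iff_continuousAt.2 fun x => (hFderiv x).continuousAt
  have hFint : IntegrableOn F (Ioi 0) :=
    integrable_of_isBigO_exp_neg (by linarith) hFcont.continuousOn hFO
  have hFlim : Tendsto F atTop (𝓝 0) := hFO.trans_tendsto <|
    tendsto_exp_atBot.comp (tendsto_id.const_mul_atTop_of_neg (by linarith))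
  have hFTC := integral_Ioi_of_hasDerivAt_of_tendsto' (fun x _ => hFderiv x)
    ((hFint.const_mul _).sub hh) hFlim
  rw [integral_sub (hFint.const_mul _) hh, integral_const_mul] at hFTC
  simp only [hFdef, mul_zero, exp_zero, one_mul] at hFTC
  linarith

noncomputable def scaleZ (ψ W : ℝ → ℝ) (u θ : ℝ) : ℝ :=
  exp (θ * u) * (1 - ψ θ * ∫ y in (0:ℝ)..u, exp (-θ * y) * W y)

section scaleZ

variable {ψ W : ℝ → ℝ}

lemma hasDerivAt_scaleZ (hW : Continuous W) (θ v : ℝ) :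
    HasDerivAt (fun v => scaleZ ψ W v θ) (θ * scaleZ ψ W v θ - ψ θ * W v) v := by
  have hI : HasDerivAt (fun v => ∫ y in (0:ℝ)..v, exp (-θ * y) * W y) (exp (-θ * v) * W v) v :=
    ((continuous_exp.comp (continuous_const.mul continuous_id)).mul hW).integral_hasStrictDerivAt
      0 v |>.hasDerivAt
  refine (((hasDerivAt_id v).const_mul θ).exp.mul ((hI.const_mul (ψ θ)).const_sub 1)).congr_deriv ?_
  have hexp : exp (θ * v) * exp (-θ * v) = 1 := by rw [← exp_add]; simp
  simp only [scaleZ, id]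
  linear_combination (-(ψ θ * W v)) * hexp

lemma scaleZ_zero (θ : ℝ) : scaleZ ψ W 0 θ = 1 := by simp [scaleZ]

lemma scaleZ_eq_exp_sub (u θ : ℝ) :
    scaleZ ψ W u θ = exp (θ * u) - ψ θ * (exp (θ * u) * ∫ y in (0:ℝ)..u, exp (-θ * y) * W y) := by
  rw [scaleZ]; ring

lemma exp_mul_integral_exp_neg_mul_nonneg (hW0 : ∀ t, 0 ≤ W t) {θ v : ℝ} (hv : 0 ≤ v) :
    0 ≤ exp (θ * v) * ∫ t in (0:ℝ)..v, exp (-θ * t) * W t :=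
  mul_nonneg (exp_pos _).le
    (intervalIntegral.integral_nonneg hv fun t _ => mul_nonneg (exp_pos _).le (hW0 t))

lemma exp_mul_integral_exp_neg_mul_le_of_le (hW : Continuous W) (hW0 : ∀ t, 0 ≤ W t) {β θ v : ℝ}
    (hβθ : β ≤ θ) (hv : 0 ≤ v) :
    exp (β * v) * ∫ t in (0:ℝ)..v, exp (-β * t) * W t
      ≤ exp (θ * v) * ∫ t in (0:ℝ)..v, exp (-θ * t) * W t := by
  have hcont (γ : ℝ) : Continuous fun t => exp (γ * v) * (exp (-γ * t) * W t) := by fun_prop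
  rw [← intervalIntegral.integral_const_mul, ← intervalIntegral.integral_const_mul]
  refine intervalIntegral.integral_mono_on hv ((hcont β).intervalIntegrable _ _)
    ((hcont θ).intervalIntegrable _ _) fun t ht => ?_
  rw [← mul_assoc, ← mul_assoc, ← exp_add, ← exp_add]
  exact mul_le_mul_of_nonneg_right (exp_le_exp.2 (by nlinarith [ht.2])) (hW0 t)

lemma scaleZ_le_exp (hW0 : ∀ t, 0 ≤ W t) {θ v : ℝ} (hψ : 0 ≤ ψ θ) (hv : 0 ≤ v) :
    scaleZ ψ W v θ ≤ exp (θ * v) := by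
  rw [scaleZ_eq_exp_sub]
  have := mul_nonneg hψ (exp_mul_integral_exp_neg_mul_nonneg hW0 (θ := θ) hv)
  linarith

lemma abs_scaleZ_le_of_le (hW : Continuous W) (hW0 : ∀ t, 0 ≤ W t) {β θ v : ℝ} (hβθ : β ≤ θ)
    (hψ : 0 < ψ θ) (hv : 0 ≤ v) (hZθ : 0 ≤ scaleZ ψ W v θ) :
    |scaleZ ψ W v β| ≤ (1 + |ψ β| / ψ θ) * exp (θ * v) := by
  set J := fun γ => exp (γ * v) * ∫ t in (0:ℝ)..v, exp (-γ * t) * W t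
  have hJβ : 0 ≤ J β := exp_mul_integral_exp_neg_mul_nonneg hW0 hv
  have hJ : J β ≤ exp (θ * v) / ψ θ := by
    rw [le_div_iff₀' hψ]
    rw [scaleZ_eq_exp_sub] at hZθ
    nlinarith [exp_mul_integral_exp_neg_mul_le_of_le hW hW0 hβθ hv]
  have hexp : exp (β * v) ≤ exp (θ * v) := exp_le_exp.2 (mul_le_mul_of_nonneg_right hβθ hv)
  calc |scaleZ ψ W v β| = |exp (β * v) - ψ β * J β| := by rw [scaleZ_eq_exp_sub]
    _ ≤ exp (β * v) + |ψ β| * J β := by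
      refine (abs_sub _ _).trans ?_
      rw [abs_exp, abs_mul, abs_of_nonneg hJβ]
    _ ≤ exp (θ * v) + |ψ β| * (exp (θ * v) / ψ θ) := by gcongr
    _ = (1 + |ψ β| / ψ θ) * exp (θ * v) := by ring

end scaleZ

def ScaleZHasLaplaceForm (ψ W : ℝ → ℝ) (Φ : ℝ) : Prop :=
  ∀ u ≥ (0:ℝ), ∀ θ > Φ, scaleZ ψ W u θ = ψ θ * ∫ y in Ioi 0, exp (-θ * y) * W (u + y)

namespace ScaleZHasLaplaceForm

variable {ψ W : ℝ → ℝ} {Φ : ℝ}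

lemma mul_integral_exp_neg_mul_eq_one (hZ : ScaleZHasLaplaceForm ψ W Φ) {θ : ℝ} (hθ : Φ < θ) :
    ψ θ * ∫ y in Ioi 0, exp (-θ * y) * W y = 1 := by
  simpa [scaleZ_zero] using (hZ 0 le_rfl θ hθ).symm

lemma integrableOn_exp_neg_mul (hZ : ScaleZHasLaplaceForm ψ W Φ) {θ : ℝ} (hθ : Φ < θ) :
    IntegrableOn (fun y => exp (-θ * y) * W y) (Ioi 0) :=
  Integrable.of_integral_ne_zero fun h => by
    have := hZ.mul_integral_exp_neg_mul_eq_one hθ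
    rw [h, mul_zero] at this
    exact zero_ne_one this

lemma isBigO_scaleZ (hZ : ScaleZHasLaplaceForm ψ W Φ) (hW : Continuous W) (hW0 : ∀ t, 0 ≤ W t)
    {θ : ℝ} (hθ : Φ < θ) (β : ℝ) :
    (fun v => scaleZ ψ W v β) =O[atTop] fun v => exp (θ * v) := by
  have hlaplace_nonneg (γ v : ℝ) : 0 ≤ ∫ y in Ioi 0, exp (-γ * y) * W (v + y) :=
    setIntegral_nonneg measurableSet_Ioi fun y _ => mul_nonneg (exp_pos _).le (hW0 _)
  have hψ {γ : ℝ} (hγ : Φ < γ) : 0 < ψ γ := by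
    have := hlaplace_nonneg γ 0
    simp only [zero_add] at this
    nlinarith [hZ.mul_integral_exp_neg_mul_eq_one hγ]
  have hZ_nonneg {γ v : ℝ} (hγ : Φ < γ) (hv : 0 ≤ v) : 0 ≤ scaleZ ψ W v γ := by
    rw [hZ v hv γ hγ]
    exact mul_nonneg (hψ hγ).le (hlaplace_nonneg γ v)
  refine IsBigO.of_bound (max (1 + |ψ β| / ψ θ) (ψ β / ψ θ)) ?_
  filter_upwards [eventually_ge_atTop 0] with v hv
  rw [norm_eq_abs, norm_eq_abs, abs_exp]
  rcases le_or_gt β θ with hβθ | hθβ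
  · exact (abs_scaleZ_le_of_le hW hW0 hβθ (hψ hθ) hv (hZ_nonneg hθ hv)).trans
      (mul_le_mul_of_nonneg_right (le_max_left _ _) (exp_pos _).le)
  have hβ : Φ < β := hθ.trans hθβ
  have hmono := setIntegral_exp_neg_mul_le_of_le (fun y => hW0 (v + y)) hθβ.le
    (integrableOn_exp_neg_mul_comp_add (hZ.integrableOn_exp_neg_mul hθ) hv)
  calc |scaleZ ψ W v β| = ψ β / ψ θ * (ψ θ * ∫ y in Ioi 0, exp (-β * y) * W (v + y)) := by
        rw [abs_of_nonneg (hZ_nonneg hβ hv), hZ v hv β hβ]; field_simp [(hψ hθ).ne']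
    _ ≤ ψ β / ψ θ * scaleZ ψ W v θ := by
        have := (hψ hβ).le; have := (hψ hθ).le
        rw [hZ v hv θ hθ]; gcongr
    _ ≤ max (1 + |ψ β| / ψ θ) (ψ β / ψ θ) * exp (θ * v) := by
        have hratio := (div_pos (hψ hβ) (hψ hθ)).le
        exact mul_le_mul (le_max_right _ _) (scaleZ_le_exp hW0 (hψ hθ).le hv) (hZ_nonneg hθ hv)
          (hratio.trans (le_max_right _ _))

end ScaleZHasLaplaceForm

theorem lemma_WZ_second_general {Ω : Type*} [MeasurableSpace Ω] (P : Measure Ω)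
    (T U : Ω → ℝ)
    (lam α Phil Philα Φα : ℝ) (hlam : 0 < lam) (hΦorder : Φα < Philα)
    (ψα : ℝ → ℝ) (hψ : ψα Philα = lam)
    (hdens : ∀ f : ℝ → ℝ, Measurable f →
      ∫ ω, Real.exp (-α * T ω) * f (U ω) ∂P
        = ∫ y in Set.Ioi (0:ℝ), Phil * Real.exp (-Philα * y) * f y)
    (W : ℝ → ℝ) (hWcont : Continuous W) (hWpos : ∀ u, 0 ≤ W u)
    (Z : ℝ → ℝ → ℝ)
    (hZdef : ∀ u θ, Z u θ
      = Real.exp (θ * u) * (1 - ψα θ * ∫ y in (0:ℝ)..u, Real.exp (-θ * y) * W y))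
    (hZ : ∀ u ≥ (0:ℝ), ∀ θ > Φα,
      Z u θ = ψα θ * ∫ y in Set.Ioi (0:ℝ), Real.exp (-θ * y) * W (u + y)) :
    ∀ u ≥ (0:ℝ), ∀ β ≥ (0:ℝ), β ≠ Philα →
      ∫ ω, Real.exp (-α * T ω) * Z (u + U ω) β ∂P
        = Phil / (Philα - β) * (Z u β - ψα β / lam * Z u Philα) := by
  intro u hu β _ hβ
  obtain rfl : Z = scaleZ ψα W := funext fun v => funext (hZdef v)
  replace hZ : ScaleZHasLaplaceForm ψα W Φα := hZ
  obtain ⟨θ, hΦθ, hθ⟩ := exists_between hΦorder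
  have hderiv (x : ℝ) : HasDerivAt (fun x => scaleZ ψα W (u + x) β)
      (β * scaleZ ψα W (u + x) β - ψα β * W (u + x)) x :=
    (hasDerivAt_scaleZ hWcont β (u + x)).comp_const_add u x
  have hgrowth : (fun x => scaleZ ψα W (u + x) β) =O[atTop] fun x => exp (θ * x) :=
    ((hZ.isBigO_scaleZ hWcont hWpos hΦθ β).comp_tendsto
      (tendsto_atTop_add_const_left _ u tendsto_id)).trans <|
      (isBigO_const_mul_self (exp (θ * u)) _ _).congr_left fun x => by
        simp only [Function.comp, id, mul_add, exp_add]
  have hint : IntegrableOn (fun x => exp (-Philα * x) * (ψα β * W (u + x))) (Ioi 0) :=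
    IntegrableOn.congr_fun ((integrableOn_exp_neg_mul_comp_add
      (hZ.integrableOn_exp_neg_mul hΦorder) hu).const_mul (ψα β))
      (fun x _ => mul_left_comm _ _ _) measurableSet_Ioi
  have hlaplace := integral_exp_neg_mul_of_hasDerivAt hderiv hθ hgrowth hint
  have hZPhil : ψα β * ∫ x in Ioi 0, exp (-Philα * x) * W (u + x)
      = ψα β / lam * scaleZ ψα W u Philα := by
    rw [hZ u hu Philα hΦorder, hψ]
    field_simp
  simp_rw [add_zero, mul_left_comm _ (ψα β), integral_const_mul, hZPhil] at hlaplace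
  rw [hdens _ (continuous_iff_continuousAt.2 fun x => (hderiv x).continuousAt).measurable]
  simp_rw [mul_assoc Phil]
  rw [integral_const_mul, ← hlaplace, ← mul_assoc, div_mul_cancel₀ _ (sub_ne_zero.2 hβ.symm)]

/-- second identity of Lemma 1:
E[e^{-αT^U} Z_α(u+U,β)] = (Φ_λ/(Φ_{λ+α}−β))(Z_α(u,β) − (ψ_α(β)/λ)Z_α(u,Φ_{λ+α})). -/
theorem lemma_WZ_second {Ω : Type*} [MeasurableSpace Ω] (P : Measure Ω)
    [IsProbabilityMeasure P]
    (T U : Ω → ℝ) (hT : Measurable T) (hU : Measurable U)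
    (hTpos : ∀ ω, 0 ≤ T ω) (hUpos : ∀ ω, 0 ≤ U ω)
    (lam α Phil Philα Φα : ℝ) (hlam : 0 < lam) (hα : 0 ≤ α)
    (hPhil : 0 < Phil) (hPhilα : 0 < Philα) (hΦα : 0 ≤ Φα) (hΦorder : Φα < Philα)
    (ψα : ℝ → ℝ) (hψ : ψα Philα = lam)
    (hdens : ∀ f : ℝ → ℝ, Measurable f →
      ∫ ω, Real.exp (-α * T ω) * f (U ω) ∂P
        = ∫ y in Set.Ioi (0:ℝ), Phil * Real.exp (-Philα * y) * f y)
    (W : ℝ → ℝ) (hWmeas : Measurable W) (hWcont : Continuous W) (hWpos : ∀ u, 0 ≤ W u)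
    (Z : ℝ → ℝ → ℝ)
    (hZdef : ∀ u θ, Z u θ
      = Real.exp (θ * u) * (1 - ψα θ * ∫ y in (0:ℝ)..u, Real.exp (-θ * y) * W y))
    (hZ : ∀ u ≥ (0:ℝ), ∀ θ > Φα,
      Z u θ = ψα θ * ∫ y in Set.Ioi (0:ℝ), Real.exp (-θ * y) * W (u + y)) :
    ∀ u ≥ (0:ℝ), ∀ β ≥ (0:ℝ), β ≠ Philα →
      ∫ ω, Real.exp (-α * T ω) * Z (u + U ω) β ∂P
        = Phil / (Philα - β) * (Z u β - ψα β / lam * Z u Philα) :=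
  lemma_WZ_second_general P T U lam α Phil Philα Φα hlam hΦorder ψα hψ hdens W hWcont hWpos Z hZdef
    hZ
end
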